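/- arXiv:2008.04758 — 7 statements merged into one kernel-verified Lean document; each statement's English description precedes it below -/
import Mathlib

section
/- Let A be a bounded subnormal operator on a complex Hilbert space H and let n ≥ 2 be an integer. If A^n is quasinormal (i.e., A^n commutes with (A^n)*(A^n)), then A is quasinormal (i.e., A commutes with A*A). -/
open ContinuousLinearMap

universe u

/-- A bounded operator is quasinormal if it commutes with `A*A`. -/
def Quasinormal {H : Type u} [NormedAddCommGroup H] [InnerProductSpace ℂ H] [CompleteSpace H]
    (A : H →L[ℂ] H) : Prop :=
  A * (adjoint A * A) = (adjoint A * A) * A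

/-- A normal extension of `A`: a Hilbert space `K` containing `H` (via an isometric linear
embedding `J`), and a normal operator `N` on `K` leaving the copy of `H` invariant and
restricting to `A` there. -/
structure NormalExtension {H : Type u} [NormedAddCommGroup H] [InnerProductSpace ℂ H]
    [CompleteSpace H] (A : H →L[ℂ] H) where
  K : Type u
  [instNorm : NormedAddCommGroup K]
  [instInner : InnerProductSpace ℂ K]
  [instComplete : CompleteSpace K]
  J : H →ₗᵢ[ℂ] K
  N : K →L[ℂ] K
  normal : adjoint N * N = N * adjoint N
  ext_eq : ∀ h : H, N (J h) = J (A h)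

/-- A bounded operator is subnormal if it has a normal extension. -/
def Subnormal {H : Type u} [NormedAddCommGroup H] [InnerProductSpace ℂ H] [CompleteSpace H]
    (A : H →L[ℂ] H) : Prop :=
  Nonempty (NormalExtension A)

/-! Let `N` be a normal extension of `A` through the isometry `V` and `Q = N* N`. Normality gives
`V* Qᵏ V = (Aᵏ)* Aᵏ` for every `k`. For `B = Aⁿ` quasinormal this yields `V* Q²ⁿ V = (B* B)²`,
which forces `Qⁿ V = V B* B`: the self-adjoint `Qⁿ` leaves `H` invariant, so it commutes with the
projection `V V*`, and so does its positive `n`-th root `Q`. Hence `Q V = V A* A`, and since `N`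
commutes with `Q`, `A` commutes with `A* A`. -/

theorem Commute.of_pow_left_of_nonneg {A : Type*} [CStarAlgebra A] [PartialOrder A]
    [StarOrderedRing A] {a b : A} (ha : 0 ≤ a) {n : ℕ} (hn : n ≠ 0)
    (h : Commute (a ^ n) b) : Commute a b := by
  have hroot : (a ^ n) ^ (n : ℝ)⁻¹ = a := by
    rw [← CFC.rpow_natCast a n, CFC.rpow_rpow_of_exponent_nonneg a _ _ (by positivity)
      (by positivity), mul_inv_cancel₀ (by exact_mod_cast hn), CFC.rpow_one a]
  rw [← hroot]
  exact h.cfc_nnreal _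

namespace ContinuousLinearMap

section Intertwining

variable {𝕜 E F : Type*} [NontriviallyNormedField 𝕜] [NormedAddCommGroup E] [NormedSpace 𝕜 E]
  [NormedAddCommGroup F] [NormedSpace 𝕜 F]

theorem pow_comp_eq_comp_pow {V : E →L[𝕜] F} {N : F →L[𝕜] F} {A : E →L[𝕜] E}
    (h : N ∘L V = V ∘L A) (k : ℕ) : (N ^ k) ∘L V = V ∘L (A ^ k) := by
  induction k with
  | zero => rfl
  | succ k ih => rw [pow_succ, pow_succ, mul_def, mul_def, comp_assoc, h, ← comp_assoc, ih,
      comp_assoc]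

theorem commute_of_comp_eq_comp {V : E →L[𝕜] F} (hV : Function.Injective V)
    {N Q : F →L[𝕜] F} {A D : E →L[𝕜] E} (hN : N ∘L V = V ∘L A) (hQ : Q ∘L V = V ∘L D)
    (hNQ : Commute N Q) : Commute A D := by
  have hVAD : V ∘L (A * D) = V ∘L (D * A) :=
    calc V ∘L (A * D) = N ∘L Q ∘L V := by rw [hQ, ← comp_assoc, hN, mul_def, comp_assoc]
      _ = Q ∘L N ∘L V := by rw [← comp_assoc, ← comp_assoc, ← mul_def, ← mul_def, hNQ.eq]
      _ = V ∘L (D * A) := by rw [hN, ← comp_assoc, hQ, mul_def, comp_assoc]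
  ext x
  exact hV (congrArg (· x) hVAD)

end Intertwining

section Compression

variable {H K : Type*} [NormedAddCommGroup H] [InnerProductSpace ℂ H] [CompleteSpace H]
  [NormedAddCommGroup K] [InnerProductSpace ℂ K] [CompleteSpace K]

theorem comp_eq_comp_of_compression_eq {V : H →L[ℂ] K} (hV : adjoint V ∘L V = 1)
    {T : K →L[ℂ] K} {C : H →L[ℂ] H} (h₁ : adjoint V ∘L T ∘L V = C)
    (h₂ : adjoint V ∘L (adjoint T ∘L T) ∘L V = adjoint C ∘L C) :
    T ∘L V = V ∘L C := by
  have h₁' : adjoint V ∘L adjoint T ∘L V = adjoint C := by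
    rw [← h₁, adjoint_comp, adjoint_comp, adjoint_adjoint, comp_assoc]
  rw [← sub_eq_zero, ← adjoint_comp_self_eq_zero_iff]
  calc adjoint (T ∘L V - V ∘L C) ∘L (T ∘L V - V ∘L C)
      = adjoint V ∘L (adjoint T ∘L T) ∘L V - (adjoint V ∘L adjoint T ∘L V) ∘L C
        - adjoint C ∘L (adjoint V ∘L T ∘L V) + adjoint C ∘L (adjoint V ∘L V) ∘L C := by
        simp only [map_sub, adjoint_comp, sub_comp, comp_sub, comp_assoc]; abel
    _ = 0 := by rw [h₁, h₂, h₁', hV, one_def, id_comp]; abel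

theorem commute_comp_adjoint_of_comp_eq {V : H →L[ℂ] K} {T : K →L[ℂ] K} {C : H →L[ℂ] H}
    (hT : IsSelfAdjoint T) (hC : IsSelfAdjoint C) (h : T ∘L V = V ∘L C) :
    Commute T (V ∘L adjoint V) := by
  have h' : adjoint V ∘L T = C ∘L adjoint V := by
    simpa only [adjoint_comp, hT.adjoint_eq, hC.adjoint_eq] using congrArg adjoint h
  show T ∘L V ∘L adjoint V = (V ∘L adjoint V) ∘L T
  rw [← comp_assoc, h, comp_assoc, comp_assoc, h']

theorem comp_eq_comp_compression_of_commute {V : H →L[ℂ] K} (hV : adjoint V ∘L V = 1)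
    {T : K →L[ℂ] K} (h : Commute T (V ∘L adjoint V)) :
    T ∘L V = V ∘L (adjoint V ∘L T ∘L V) := by
  calc T ∘L V = T ∘L (V ∘L adjoint V) ∘L V := by rw [comp_assoc, hV, one_def, comp_id]
    _ = V ∘L (adjoint V ∘L T ∘L V) := by rw [← comp_assoc, ← mul_def, h.eq]; rfl

theorem adjoint_comp_pow_comp_eq {V : H →L[ℂ] K} (hV : adjoint V ∘L V = 1) {N : K →L[ℂ] K}
    [IsStarNormal N] {A : H →L[ℂ] H} (h : N ∘L V = V ∘L A) (k : ℕ) :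
    adjoint V ∘L ((adjoint N * N) ^ k) ∘L V = adjoint (A ^ k) * A ^ k := by
  have hpow : (adjoint N * N) ^ k = adjoint (N ^ k) ∘L N ^ k := by
    rw [← star_eq_adjoint, (star_comm_self (x := N)).mul_pow, ← star_pow]; rfl
  rw [hpow, comp_assoc, pow_comp_eq_comp_pow h, ← comp_assoc, ← adjoint_comp,
    pow_comp_eq_comp_pow h, adjoint_comp, comp_assoc, ← comp_assoc _ V, hV, one_def, id_comp]
  rfl

end Compression

end ContinuousLinearMap

theorem Quasinormal.adjoint_sq_mul_sq {H : Type*} [NormedAddCommGroup H] [InnerProductSpace ℂ H]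
    [CompleteSpace H] {B : H →L[ℂ] H} (hB : Quasinormal B) :
    adjoint (B ^ 2) * B ^ 2 = (adjoint B * B) ^ 2 := by
  rw [← star_eq_adjoint, star_pow, star_eq_adjoint, sq, sq, sq, mul_assoc, ← mul_assoc _ B B,
    ← hB, ← mul_assoc, ← mul_assoc]

attribute [local instance] NormalExtension.instNorm NormalExtension.instInner
  NormalExtension.instComplete

/-- Subnormal `n`th roots of quasinormal operators are quasinormal. -/
theorem subnormal_root_of_quasinormal_is_quasinormal
    {H : Type u} [NormedAddCommGroup H] [InnerProductSpace ℂ H] [CompleteSpace H]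
    (A : H →L[ℂ] H) (n : ℕ) (hn : 2 ≤ n) (hsub : Subnormal A)
    (hq : Quasinormal (A ^ n)) : Quasinormal A := by
  obtain ⟨e⟩ := hsub
  let V := e.J.toContinuousLinearMap
  have hV : adjoint V ∘L V = 1 := e.J.adjoint_comp_self
  have hNV : e.N ∘L V = V ∘L A := ext e.ext_eq
  have : IsStarNormal e.N := ⟨e.normal⟩
  set Q := adjoint e.N * e.N
  have hQ : IsSelfAdjoint Q := .star_mul_self e.N
  have hC : IsSelfAdjoint (adjoint (A ^ n) * A ^ n) := .star_mul_self (A ^ n)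
  have hQnV : (Q ^ n) ∘L V = V ∘L (adjoint (A ^ n) * A ^ n) := by
    refine comp_eq_comp_of_compression_eq hV (adjoint_comp_pow_comp_eq hV hNV n) ?_
    rw [(hQ.pow n).adjoint_eq, ← mul_def, ← pow_add, adjoint_comp_pow_comp_eq hV hNV, ← two_mul,
      pow_mul', hq.adjoint_sq_mul_sq, sq, hC.adjoint_eq]
    rfl
  have hPQ : Commute Q (V ∘L adjoint V) :=
    (commute_comp_adjoint_of_comp_eq (hQ.pow n) hC hQnV).of_pow_left_of_nonneg
      (star_mul_self_nonneg e.N) (by omega)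
  have hQV : Q ∘L V = V ∘L (adjoint A * A) := by
    rw [comp_eq_comp_compression_of_commute hV hPQ, ← pow_one Q,
      adjoint_comp_pow_comp_eq hV hNV, pow_one]
  exact commute_of_comp_eq_comp e.J.injective hNV hQV
    ((star_comm_self (x := e.N)).symm.mul_right (.refl _))
end

section
/- Every quasinormal bounded operator on a complex Hilbert space is subnormal. -/
/-!
If `A` commutes with `A*A`, then `D = A*A - AA*` is positive (its cube is `D (A*A) D`) and
`DA = 0`. With `B = √D` this gives `BA = 0 = A*B` and `B² + AA* = A*A`, which say exactly that
the operator matrix `[[A, B], [0, A*]]` on `H ⊕ H` is normal; it extends `A` along the first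
summand.
-/

open ContinuousLinearMap

universe u

lemma selfCommutator_mul_eq_zero_of_commute {R : Type*} [Ring R] [Star R] {a : R}
    (ha : Commute a (star a * a)) : (star a * a - a * star a) * a = 0 := by
  rw [sub_mul, ← ha.eq, mul_assoc, sub_self]

section CStarAlgebra

variable {𝒜 : Type*} [CStarAlgebra 𝒜] [PartialOrder 𝒜] [StarOrderedRing 𝒜]

lemma IsSelfAdjoint.nonneg_of_pow_nonneg {d : 𝒜} (hd : IsSelfAdjoint d) {n : ℕ} (hn : Odd n)
    (hdn : 0 ≤ d ^ n) : 0 ≤ d := by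
  rw [StarOrderedRing.nonneg_iff_spectrum_nonneg (R := ℝ) _ (hd.pow n), ← cfc_pow_id (R := ℝ) d,
    cfc_map_spectrum (fun x : ℝ => x ^ n) d] at hdn
  rw [StarOrderedRing.nonneg_iff_spectrum_nonneg (R := ℝ) _ hd]
  exact fun x hx => hn.pow_nonneg_iff.mp (hdn _ ⟨x, hx, rfl⟩)

lemma sub_nonneg_of_mul_self_eq_mul {t s : 𝒜} (ht : 0 ≤ t) (hs : IsSelfAdjoint s)
    (hst : s * s = t * s) : 0 ≤ t - s := by
  have hd : IsSelfAdjoint (t - s) := ht.isSelfAdjoint.sub hs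
  have hsq : (t - s) * (t - s) = (t - s) * t := by
    rw [mul_sub (t - s) t s, sub_mul t s s, hst, sub_self, sub_zero]
  have hcube : (t - s) ^ 3 = star (t - s) * t * (t - s) := by
    rw [hd.star_eq, pow_succ, pow_two, hsq]
  refine hd.nonneg_of_pow_nonneg (by decide : Odd 3) ?_
  rw [hcube]
  exact star_left_conjugate_nonneg ht _

lemma CFC.sqrt_mul_eq_zero {d a : 𝒜} (hd : 0 ≤ d) (hda : d * a = 0) : CFC.sqrt d * a = 0 := by
  rw [← CStarRing.star_mul_self_eq_zero_iff]
  calc star (CFC.sqrt d * a) * (CFC.sqrt d * a)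
      = star a * (CFC.sqrt d * CFC.sqrt d * a) := by
        rw [star_mul, (CFC.sqrt_nonneg d).isSelfAdjoint.star_eq]; noncomm_ring
    _ = 0 := by rw [CFC.sqrt_mul_sqrt_self d hd, hda, mul_zero]

lemma selfCommutator_nonneg_of_commute {a : 𝒜} (ha : Commute a (star a * a)) :
    0 ≤ star a * a - a * star a := by
  refine sub_nonneg_of_mul_self_eq_mul (star_mul_self_nonneg a) (.mul_star_self a) ?_
  calc a * star a * (a * star a) = a * (star a * a) * star a := by noncomm_ring
    _ = star a * a * (a * star a) := by rw [ha.eq]; noncomm_ring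

end CStarAlgebra

section Inl

variable (p : ENNReal) [Fact (1 ≤ p)] (𝕜 : Type*) {E F : Type*} [NormedField 𝕜]
  [SeminormedAddCommGroup E] [SeminormedAddCommGroup F] [NormedSpace 𝕜 E] [NormedSpace 𝕜 F]

variable (E F) in
noncomputable def WithLp.inlₗᵢ : E →ₗᵢ[𝕜] WithLp p (E × F) where
  toLinearMap := (WithLp.linearEquiv p 𝕜 (E × F)).symm.toLinearMap ∘ₗ LinearMap.inl 𝕜 E F
  norm_map' := WithLp.norm_toLp_fst p E F

@[simp]
lemma WithLp.inlₗᵢ_apply (x : E) : WithLp.inlₗᵢ p 𝕜 E F x = WithLp.toLp p (x, 0) :=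
  rfl

end Inl

section BlockOperator

variable {𝕜 H : Type*} [RCLike 𝕜] [NormedAddCommGroup H] [InnerProductSpace 𝕜 H]

noncomputable def blockOp (a b c d : H →L[𝕜] H) : WithLp 2 (H × H) →L[𝕜] WithLp 2 (H × H) :=
  (WithLp.prodContinuousLinearEquiv 2 𝕜 H H).symm.toContinuousLinearMap ∘L
    ((a.coprod b).prod (c.coprod d)) ∘L
    (WithLp.prodContinuousLinearEquiv 2 𝕜 H H).toContinuousLinearMap

@[simp]
lemma blockOp_apply (a b c d : H →L[𝕜] H) (x : WithLp 2 (H × H)) :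
    blockOp a b c d x = WithLp.toLp 2 (a x.fst + b x.snd, c x.fst + d x.snd) :=
  rfl

lemma blockOp_mul_blockOp (a b c d a' b' c' d' : H →L[𝕜] H) :
    blockOp a b c d * blockOp a' b' c' d' =
      blockOp (a * a' + b * c') (a * b' + b * d') (c * a' + d * c') (c * b' + d * d') := by
  ext x : 1
  simp only [mul_apply_eq_comp, blockOp_apply, WithLp.fst, WithLp.snd, add_apply, map_add]
  congr 2 <;> abel

lemma adjoint_blockOp [CompleteSpace H] (a b c d : H →L[𝕜] H) :
    adjoint (blockOp a b c d) = blockOp (adjoint a) (adjoint c) (adjoint b) (adjoint d) := by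
  refine ((eq_adjoint_iff _ _).mpr fun x y => ?_).symm
  simp only [blockOp_apply, WithLp.prod_inner_apply, WithLp.fst, WithLp.snd, inner_add_left,
    inner_add_right, adjoint_inner_left]
  ring

lemma isStarNormal_blockOp [CompleteSpace H] {a b : H →L[𝕜] H} (hb : IsSelfAdjoint b)
    (hba : b * a = 0) (hbb : b * b + a * adjoint a = adjoint a * a) :
    IsStarNormal (blockOp a b 0 (adjoint a)) := by
  have hab : adjoint a * b = 0 := by
    simpa only [star_mul, hb.star_eq, star_eq_adjoint, star_zero] using congrArg star hba
  constructor
  rw [star_eq_adjoint, adjoint_blockOp, adjoint_adjoint, map_zero, hb.adjoint_eq,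
    Commute, SemiconjBy, blockOp_mul_blockOp, blockOp_mul_blockOp]
  simp only [mul_zero, zero_mul, add_zero, zero_add, hab, hba, hbb, add_comm (a * adjoint a)]

end BlockOperator

/-- Every quasinormal bounded operator is subnormal. -/
theorem subnormal_of_quasinormal
    {H : Type u} [NormedAddCommGroup H] [InnerProductSpace ℂ H] [CompleteSpace H]
    (A : H →L[ℂ] H) (hA : Quasinormal A) : Subnormal A := by
  have hcomm : Commute A (star A * A) := by rw [star_eq_adjoint]; exact hA
  have hD : 0 ≤ star A * A - A * star A := selfCommutator_nonneg_of_commute hcomm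
  set B := CFC.sqrt (star A * A - A * star A)
  have hBA : B * A = 0 := CFC.sqrt_mul_eq_zero hD (selfCommutator_mul_eq_zero_of_commute hcomm)
  have hBB : B * B + A * adjoint A = adjoint A * A := by
    rw [CFC.sqrt_mul_sqrt_self _ hD, star_eq_adjoint, sub_add_cancel]
  have hN := isStarNormal_blockOp (CFC.sqrt_nonneg _).isSelfAdjoint hBA hBB
  exact ⟨{ K := WithLp 2 (H × H)
           J := WithLp.inlₗᵢ 2 ℂ H H
           N := blockOp A B 0 (adjoint A)
           normal := by simpa only [star_eq_adjoint] using hN.star_comm_self.eq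
           ext_eq := fun h => by simp }⟩
end

section
/- If A and B are positive bounded operators on a complex Hilbert space with B ≤ A, and p ∈ [0,1], then B^p ≤ A^p (Löwner–Heinz inequality). -/
/-- Löwner–Heinz inequality: if `0 ≤ B ≤ A` and `p ∈ [0,1]`, then `B^p ≤ A^p`. -/
theorem loewner_heinz
    {H : Type*} [NormedAddCommGroup H] [InnerProductSpace ℂ H] [CompleteSpace H]
    (A B : H →L[ℂ] H) (hA : 0 ≤ A) (hB : 0 ≤ B) (hBA : B ≤ A)
    (p : ℝ) (hp0 : 0 ≤ p) (hp1 : p ≤ 1) :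
    cfc (fun x : ℝ => x ^ p) B ≤ cfc (fun x : ℝ => x ^ p) A := by
  rw [← CFC.rpow_eq_cfc_real hB, ← CFC.rpow_eq_cfc_real hA]
  exact CFC.rpow_le_rpow ⟨hp0, hp1⟩ hBA
end

section
/- Let N be a normal bounded operator on a Hilbert space K, let H be a closed subspace of K invariant under N, let A = N|_H, and let P be the orthogonal projection of K onto H. Then P (N*N)^k P = P N^{*k} N^k P for all nonnegative integers k, and the compression P (N*N)^k P restricted to H equals A^{*k} A^k. -/
/-!
Normality makes `N*` and `N` commute, so `(N*N)^k = N^{*k} N^k`, which gives the first identity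
after multiplying by `P` on both sides. For the second, `A^k` is the restriction of `N^k` to `S`,
and the compression to `S` of the adjoint of any operator leaving `S` invariant is the adjoint of
its restriction: for `u, v ∈ S`, `⟪u, P T* v⟫ = ⟪T u, v⟫`.
-/

open ContinuousLinearMap

theorem ContinuousLinearMap.adjoint_pow {𝕜 E : Type*} [RCLike 𝕜] [NormedAddCommGroup E]
    [InnerProductSpace 𝕜 E] [CompleteSpace E] (T : E →L[𝕜] E) (n : ℕ) : adjoint (T ^ n) = adjoint T ^ n := by
  rw [← star_eq_adjoint, ← star_eq_adjoint, star_pow]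

section Restriction

variable {𝕜 K : Type*} [RCLike 𝕜] [NormedAddCommGroup K] [InnerProductSpace 𝕜 K]
  {S : Submodule 𝕜 K} {A : S →L[𝕜] S} {T : K →L[𝕜] K}

theorem coe_pow_apply_of_coe_apply (hA : ∀ x : S, (A x : K) = T x) (n : ℕ) (x : S) :
    ((A ^ n) x : K) = (T ^ n) (x : K) := by
  induction n with
  | zero => rfl
  | succ n ih => rw [pow_succ', pow_succ', mul_apply_eq_comp, mul_apply_eq_comp, hA, ih]

theorem orthogonalProjectionOnto_adjoint_apply_of_coe_apply [CompleteSpace K] [CompleteSpace S]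
    (hA : ∀ x : S, (A x : K) = T x) (y : S) :
    S.orthogonalProjectionOnto (adjoint T y) = adjoint A y := by
  refine ext_inner_left 𝕜 fun u => ?_
  rw [Submodule.inner_orthogonalProjectionOnto_eq_of_mem_left, adjoint_inner_right,
    adjoint_inner_right, ← hA, Submodule.coe_inner]

end Restriction

theorem compression_powers_of_normal_extension_general
    {K : Type*} [NormedAddCommGroup K] [InnerProductSpace ℂ K] [CompleteSpace K]
    (N : K →L[ℂ] K) (hN : adjoint N * N = N * adjoint N)
    (S : Submodule ℂ K) [CompleteSpace S]
    (A : S →L[ℂ] S) (hA : ∀ x : S, (A x : K) = N x)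
    (P : K →L[ℂ] K) (k : ℕ) :
    P * (adjoint N * N) ^ k * P = P * (adjoint N) ^ k * N ^ k * P ∧
      ∀ x : S, S.orthogonalProjectionOnto (((adjoint N * N) ^ k) (x : K))
        = ((adjoint A) ^ k * A ^ k) x := by
  have hpow : (adjoint N * N) ^ k = (adjoint N) ^ k * N ^ k := Commute.mul_pow hN k
  refine ⟨by rw [hpow, ← mul_assoc], fun x => ?_⟩
  rw [hpow, ← adjoint_pow, ← adjoint_pow, mul_apply_eq_comp, mul_apply_eq_comp,
    ← coe_pow_apply_of_coe_apply hA]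
  exact orthogonalProjectionOnto_adjoint_apply_of_coe_apply (coe_pow_apply_of_coe_apply hA k) _

/-- If `N` is normal on `K`, `S` is a closed `N`-invariant subspace, `A = N|_S` and `P` is
the orthogonal projection onto `S`, then `P (N*N)^k P = P N^{*k} N^k P`, and the compression
`P (N*N)^k P` restricted to `S` equals `A^{*k} A^k`. -/
theorem compression_powers_of_normal_extension
    {K : Type*} [NormedAddCommGroup K] [InnerProductSpace ℂ K] [CompleteSpace K]
    (N : K →L[ℂ] K) (hN : adjoint N * N = N * adjoint N)
    (S : Submodule ℂ K) [CompleteSpace S] (hinv : ∀ x ∈ S, N x ∈ S)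
    (A : S →L[ℂ] S) (hA : ∀ x : S, (A x : K) = N x)
    (P : K →L[ℂ] K) (hP : P = S.subtypeL ∘L S.orthogonalProjectionOnto) (k : ℕ) :
    P * (adjoint N * N) ^ k * P = P * (adjoint N) ^ k * N ^ k * P ∧
      ∀ x : S, S.orthogonalProjectionOnto (((adjoint N * N) ^ k) (x : K))
        = ((adjoint A) ^ k * A ^ k) x :=
  compression_powers_of_normal_extension_general N hN S A hA P k
end

section
/- Let N be a normal bounded operator on a Hilbert space K, H a closed N-invariant subspace, A = N|_H, P the orthogonal projection onto H, and n ≥ 1, κ ≥ 2 integers. If A^{*nκ} A^{nκ} = (A^{*n} A^n)^κ, then P (N*N)^n P = (P (N*N)^{κn} P)^{1/κ}. -/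
open ContinuousLinearMap

/-! For normal `N` one has `(N*N)^m = N*^m N^m`, and `N^m` restricts to `A^m` on `S`, so the
compression `P (N*N)^m P` is `A*^m A^m ⊕ 0` on `S ⊕ Sᗮ`. Operators of the form `T ⊕ 0` multiply
like the `T`, so the hypothesis says that `P (N*N)^{κn} P` is the `κ`-th power of the positive
operator `P (N*N)^n P`, which is therefore its positive `κ`-th root. -/

section RealRoot

variable {R : Type*} [Ring R] [StarRing R] [TopologicalSpace R] [Algebra ℝ R] [PartialOrder R]
  [StarOrderedRing R] [T2Space R] [ContinuousFunctionalCalculus ℝ R IsSelfAdjoint]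
  [NonnegSpectrumClass ℝ R]

theorem cfc_rpow_inv_natCast_pow {a : R} (ha : 0 ≤ a) {k : ℕ} (hk : k ≠ 0) :
    cfc (fun x : ℝ => x ^ (k : ℝ)⁻¹) (a ^ k) = a := by
  rw [← cfc_comp_pow _ k a (Real.continuous_rpow_const (by positivity)).continuousOn
    ha.isSelfAdjoint]
  refine (cfc_congr fun x hx => ?_).trans (cfc_id' ℝ a ha.isSelfAdjoint)
  exact Real.pow_rpow_inv_natCast (spectrum_nonneg_of_nonneg ha hx) hk

end RealRoot

theorem Commute.star_mul_self_pow {M : Type*} [Monoid M] [StarMul M] {a : M}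
    (h : Commute (star a) a) (m : ℕ) : (star a * a) ^ m = star (a ^ m) * a ^ m := by
  rw [h.mul_pow, star_pow]

namespace Submodule

variable {𝕜 E : Type*} [RCLike 𝕜] [NormedAddCommGroup E] [InnerProductSpace 𝕜 E]
  (S : Submodule 𝕜 E)

section HasOrthogonalProjection

variable [S.HasOrthogonalProjection]

theorem orthogonalProjectionOnto_comp_subtypeL :
    S.orthogonalProjectionOnto ∘L S.subtypeL = ContinuousLinearMap.id 𝕜 S := by
  ext x
  simp [orthogonalProjectionOnto_mem_subspace_eq_self]

/-- The operator `T ⊕ 0` on `E = S ⊕ Sᗮ`. -/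
noncomputable def extendByZero (T : S →L[𝕜] S) : E →L[𝕜] E :=
  S.subtypeL ∘L T ∘L S.orthogonalProjectionOnto

theorem extendByZero_mul (T₁ T₂ : S →L[𝕜] S) :
    S.extendByZero T₁ * S.extendByZero T₂ = S.extendByZero (T₁ * T₂) := by
  simp only [extendByZero, ContinuousLinearMap.mul_def, comp_assoc]
  rw [← comp_assoc S.orthogonalProjectionOnto, orthogonalProjectionOnto_comp_subtypeL, id_comp]

theorem extendByZero_pow (T : S →L[𝕜] S) {k : ℕ} (hk : k ≠ 0) :
    S.extendByZero T ^ k = S.extendByZero (T ^ k) := by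
  obtain ⟨k, rfl⟩ := Nat.exists_eq_succ_of_ne_zero hk
  induction k with
  | zero => simp
  | succ k ih => rw [pow_succ, ih k.succ_ne_zero, extendByZero_mul, ← pow_succ]

end HasOrthogonalProjection

theorem pow_comp_subtypeL {M : E →L[𝕜] E} {T : S →L[𝕜] S}
    (hMT : M ∘L S.subtypeL = S.subtypeL ∘L T) (m : ℕ) :
    (M ^ m) ∘L S.subtypeL = S.subtypeL ∘L T ^ m := by
  induction m with
  | zero => rfl
  | succ m ih =>
    rw [pow_succ, pow_succ, ContinuousLinearMap.mul_def, ContinuousLinearMap.mul_def, comp_assoc,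
      hMT, ← comp_assoc, ih, comp_assoc]

variable [CompleteSpace E] [CompleteSpace S]

theorem starProjection_mul_adjoint_mul_self_mul_starProjection {M : E →L[𝕜] E}
    {T : S →L[𝕜] S} (hMT : M ∘L S.subtypeL = S.subtypeL ∘L T) :
    S.starProjection * (adjoint M * M) * S.starProjection = S.extendByZero (adjoint T * T) := by
  calc S.starProjection * (adjoint M * M) * S.starProjection
      = S.subtypeL ∘L adjoint (M ∘L S.subtypeL) ∘L (M ∘L S.subtypeL) ∘L
          S.orthogonalProjectionOnto := by
        simp only [starProjection, adjoint_comp, adjoint_subtypeL, ContinuousLinearMap.mul_def,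
          comp_assoc]
    _ = S.subtypeL ∘L adjoint T ∘L (S.orthogonalProjectionOnto ∘L S.subtypeL) ∘L T ∘L
          S.orthogonalProjectionOnto := by
        simp only [hMT, adjoint_comp, adjoint_subtypeL, comp_assoc]
    _ = S.extendByZero (adjoint T * T) := by
        rw [orthogonalProjectionOnto_comp_subtypeL, id_comp]
        rfl

end Submodule

theorem compression_power_eq_root_of_compression_general
    {K : Type*} [NormedAddCommGroup K] [InnerProductSpace ℂ K] [CompleteSpace K]
    (N : K →L[ℂ] K) (hN : adjoint N * N = N * adjoint N)
    (S : Submodule ℂ K) [CompleteSpace S]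
    (A : S →L[ℂ] S) (hA : ∀ x : S, (A x : K) = N x)
    (P : K →L[ℂ] K) (hP : P = S.subtypeL ∘L S.orthogonalProjection)
    (n κ : ℕ) (hκ : 2 ≤ κ)
    (hmom : (adjoint A) ^ (n * κ) * A ^ (n * κ) = ((adjoint A) ^ n * A ^ n) ^ κ) :
    P * (adjoint N * N) ^ n * P =
      cfc (fun x : ℝ => x ^ ((κ : ℝ)⁻¹)) (P * (adjoint N * N) ^ (κ * n) * P) := by
  have hP' : P = S.starProjection := hP
  subst hP'
  have hNA : N ∘L S.subtypeL = S.subtypeL ∘L A := ext fun x => (hA x).symm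
  have hcomm : Commute (star N) N := hN
  have compress (m : ℕ) : S.starProjection * (adjoint N * N) ^ m * S.starProjection =
      S.extendByZero (adjoint A ^ m * A ^ m) := by
    rw [← star_eq_adjoint, hcomm.star_mul_self_pow, star_eq_adjoint,
      S.starProjection_mul_adjoint_mul_self_mul_starProjection (S.pow_comp_subtypeL hNA m),
      ← star_eq_adjoint, star_pow, star_eq_adjoint]
  have hnonneg : 0 ≤ S.starProjection * (adjoint N * N) ^ n * S.starProjection := by
    refine (isSelfAdjoint_starProjection S).conjugate_nonneg ?_
    rw [← star_eq_adjoint, hcomm.star_mul_self_pow]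
    exact star_mul_self_nonneg _
  have hpow : (S.starProjection * (adjoint N * N) ^ n * S.starProjection) ^ κ =
      S.starProjection * (adjoint N * N) ^ (κ * n) * S.starProjection := by
    rw [compress, compress, S.extendByZero_pow _ (by omega), ← hmom, mul_comm κ n]
  rw [← hpow, cfc_rpow_inv_natCast_pow hnonneg (by omega)]

/-- If `N` is normal on `K`, `S` a closed `N`-invariant subspace, `A = N|_S`, `P` the
orthogonal projection onto `S`, `n ≥ 1`, `κ ≥ 2`, and `A^{*nκ} A^{nκ} = (A^{*n} A^n)^κ`,
then `P (N*N)^n P = (P (N*N)^{κn} P)^{1/κ}`. -/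
theorem compression_power_eq_root_of_compression
    {K : Type*} [NormedAddCommGroup K] [InnerProductSpace ℂ K] [CompleteSpace K]
    (N : K →L[ℂ] K) (hN : adjoint N * N = N * adjoint N)
    (S : Submodule ℂ K) [CompleteSpace S] (hinv : ∀ x ∈ S, N x ∈ S)
    (A : S →L[ℂ] S) (hA : ∀ x : S, (A x : K) = N x)
    (P : K →L[ℂ] K) (hP : P = S.subtypeL ∘L S.orthogonalProjection)
    (n κ : ℕ) (hn : 1 ≤ n) (hκ : 2 ≤ κ)
    (hmom : (adjoint A) ^ (n * κ) * A ^ (n * κ) = ((adjoint A) ^ n * A ^ n) ^ κ) :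
    P * (adjoint N * N) ^ n * P =
      cfc (fun x : ℝ => x ^ ((κ : ℝ)⁻¹)) (P * (adjoint N * N) ^ (κ * n) * P) :=
  compression_power_eq_root_of_compression_general N hN S A hA P hP n κ hκ hmom
end

section
/- Let F be a semispectral Borel measure on [0,∞) with values in bounded operators on a Hilbert space H, let n ≥ 1, and let ψ_n(x) = x^n. If E is a spectral measure on [0,∞) such that ∫ x^k dE(x) = ∫ x^k d(F ∘ ψ_n^{-1})(x) for all nonnegative integers k, and F ∘ ψ_n^{-1} has compact support, then E = F ∘ ψ_n^{-1}, and consequently F is a spectral measure. -/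
open ContinuousLinearMap MeasureTheory

/-- A semispectral (positive-operator-valued) measure on a measurable space `X`, acting on a
complex Hilbert space `H`. For each vector `h`, the set function `Δ ↦ ⟨F(Δ)h, h⟩` is given by
a (finite, positive) Borel measure, and `F(X) = I`. -/
structure SemispectralMeasure (X : Type*) [MeasurableSpace X]
    (H : Type*) [NormedAddCommGroup H] [InnerProductSpace ℂ H] [CompleteSpace H] where
  /-- the operator-valued set function -/
  toFun : Set X → H →L[ℂ] H
  /-- the scalar measure `⟨F(·)h, h⟩` associated with a vector `h` -/
  measure : H → Measure X
  finite : ∀ h : H, IsFiniteMeasure (measure h)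
  eval : ∀ (h : H) (Δ : Set X), MeasurableSet Δ →
    (inner ℂ (toFun Δ h) h : ℂ) = ((measure h Δ).toReal : ℂ)
  total : toFun Set.univ = 1

/-- A semispectral measure is spectral if its values (on Borel sets) are orthogonal
projections. -/
def SemispectralMeasure.IsSpectral {X : Type*} [MeasurableSpace X]
    {H : Type*} [NormedAddCommGroup H] [InnerProductSpace ℂ H] [CompleteSpace H]
    (F : SemispectralMeasure X H) : Prop :=
  ∀ Δ : Set X, MeasurableSet Δ → IsSelfAdjoint (F.toFun Δ) ∧ IsIdempotentElem (F.toFun Δ)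

variable {H : Type*} [NormedAddCommGroup H] [InnerProductSpace ℂ H] [CompleteSpace H]

/-!
For each vector `h` let `μ_h = ⟨E(·)h, h⟩` and `ν_h = ⟨F(ψ_n⁻¹ ·)h, h⟩`. The measures `ν_h` live
in a fixed interval `[0, C]`, and finite measures on a compact interval are determined by their
moments, by Weierstrass approximation. The difficulty is that `μ_h` is not known to be compactly
supported, so its moments may not exist (the Bochner integral is then `0`, and the hypothesis says
nothing). Spectrality repairs this: for `g = E([-m, m])h` the measure `μ_g` is `μ_h` restricted
to `[-m, m]`, compactly supported, hence `μ_g = ν_g`; so `μ_h` has no mass in `[-m, m] \ [0, C]`.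
Letting `m → ∞`, `μ_h` lives in `[0, C]` and equals `ν_h`. Quadratic forms determine operators,
so `E = F ∘ ψ_n⁻¹`. Finally `ψ_n` is injective on `[0, ∞)`, which carries `F`, so
`F(Δ) = E(ψ_n(Δ ∩ [0, ∞)))` is a projection.
-/

open Set Polynomial

section Moments

variable {μ ν : Measure ℝ} {a b : ℝ}

lemma Continuous.integrable_of_ae_mem_Icc [IsFiniteMeasure μ] (hμ : ∀ᵐ x ∂μ, x ∈ Icc a b)
    {f : ℝ → ℝ} (hf : Continuous f) : Integrable f μ := by
  obtain ⟨C, hC⟩ := isCompact_Icc.exists_bound_of_continuousOn hf.continuousOn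
  exact .of_bound hf.aestronglyMeasurable C (hμ.mono hC)

variable [IsFiniteMeasure μ] [IsFiniteMeasure ν]

lemma integral_eval_eq_of_moments_eq (hμ : ∀ᵐ x ∂μ, x ∈ Icc a b) (hν : ∀ᵐ x ∂ν, x ∈ Icc a b)
    (hmom : ∀ k : ℕ, ∫ x, x ^ k ∂μ = ∫ x, x ^ k ∂ν) (p : ℝ[X]) :
    ∫ x, p.eval x ∂μ = ∫ x, p.eval x ∂ν := by
  induction p using Polynomial.induction_on' with
  | add p q hp hq =>
    simp only [eval_add]
    rw [integral_add (p.continuous.integrable_of_ae_mem_Icc hμ)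
        (q.continuous.integrable_of_ae_mem_Icc hμ),
      integral_add (p.continuous.integrable_of_ae_mem_Icc hν)
        (q.continuous.integrable_of_ae_mem_Icc hν), hp, hq]
  | monomial k c =>
    simp only [eval_monomial]
    rw [integral_const_mul, integral_const_mul, hmom]

lemma integral_eq_of_integral_eval_eq (hμ : ∀ᵐ x ∂μ, x ∈ Icc a b) (hν : ∀ᵐ x ∂ν, x ∈ Icc a b)
    (hpoly : ∀ p : ℝ[X], ∫ x, p.eval x ∂μ = ∫ x, p.eval x ∂ν) {f : ℝ → ℝ} (hf : Continuous f) :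
    ∫ x, f x ∂μ = ∫ x, f x ∂ν := by
  have approx : ∀ (κ : Measure ℝ) [IsFiniteMeasure κ], (∀ᵐ x ∂κ, x ∈ Icc a b) →
      ∀ (p : ℝ[X]) (δ : ℝ), (∀ x ∈ Icc a b, |p.eval x - f x| < δ) →
      dist (∫ x, p.eval x ∂κ) (∫ x, f x ∂κ) ≤ δ * κ.real univ := by
    intro κ _ hκ p δ hp
    rw [dist_eq_norm, ← integral_sub (p.continuous.integrable_of_ae_mem_Icc hκ)
      (hf.integrable_of_ae_mem_Icc hκ)]
    exact norm_integral_le_of_norm_le_const (hκ.mono fun x hx => (hp x hx).le)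
  refine eq_of_forall_dist_le fun ε hε => ?_
  set M := μ.real univ + ν.real univ
  have hM : 0 ≤ M := by positivity
  obtain ⟨p, hp⟩ := exists_polynomial_near_of_continuousOn a b f hf.continuousOn (ε / (M + 1))
    (by positivity)
  calc dist (∫ x, f x ∂μ) (∫ x, f x ∂ν)
      ≤ dist (∫ x, p.eval x ∂μ) (∫ x, f x ∂μ) + dist (∫ x, p.eval x ∂ν) (∫ x, f x ∂ν) :=
        (dist_triangle_left _ _ _).trans_eq (by rw [hpoly p])
    _ ≤ ε / (M + 1) * μ.real univ + ε / (M + 1) * ν.real univ :=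
        add_le_add (approx μ hμ p _ hp) (approx ν hν p _ hp)
    _ = ε * (M / (M + 1)) := by ring
    _ ≤ ε := mul_le_of_le_one_right hε.le ((div_le_one (by positivity)).2 (by linarith))

theorem MeasureTheory.Measure.ext_of_moments_eq_of_ae_mem_Icc (hμ : ∀ᵐ x ∂μ, x ∈ Icc a b)
    (hν : ∀ᵐ x ∂ν, x ∈ Icc a b) (hmom : ∀ k : ℕ, ∫ x, x ^ k ∂μ = ∫ x, x ^ k ∂ν) : μ = ν :=
  ext_of_forall_integral_eq_of_IsFiniteMeasure fun f =>
    integral_eq_of_integral_eval_eq hμ hν (integral_eval_eq_of_moments_eq hμ hν hmom) f.continuous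

end Moments

lemma ContinuousLinearMap.ext_inner_self {V : Type*} [NormedAddCommGroup V]
    [InnerProductSpace ℂ V] {S T : V →L[ℂ] V} (hST : ∀ x, inner ℂ (S x) x = inner ℂ (T x) x) :
    S = T :=
  coe_injective <| (ext_inner_map _ _).1 hST

lemma IsIdempotentElem.mul_eq_zero_of_add {𝕜 R : Type*} [DivisionRing 𝕜] [CharZero 𝕜]
    [NonUnitalRing R] [Module 𝕜 R] {p q : R} (hp : IsIdempotentElem p) (hq : IsIdempotentElem q)
    (hpq : IsIdempotentElem (p + q)) : p * q = 0 := by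
  have hanti : p * q + q * p = 0 := (hp.add_iff hq).1 hpq
  have hleft : p * q + p * q * p = 0 := by
    simpa only [mul_add, ← mul_assoc, hp.eq, mul_zero] using congrArg (p * ·) hanti
  have hright : p * q * p + q * p = 0 := by
    simpa only [add_mul, mul_assoc, hp.eq, zero_mul] using congrArg (· * p) hanti
  have hcomm : p * q = q * p := by
    rw [eq_neg_of_add_eq_zero_left hleft, eq_neg_of_add_eq_zero_right hright]
  rw [← hcomm, ← two_smul 𝕜] at hanti
  exact (smul_eq_zero.1 hanti).resolve_left two_ne_zero

namespace SemispectralMeasure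

variable {X : Type*} [MeasurableSpace X] {E F : SemispectralMeasure X H} {A B : Set X}

lemma toFun_eq_of_measure_eq (hA : MeasurableSet A) (hB : MeasurableSet B)
    (hAB : ∀ h, E.measure h A = F.measure h B) : E.toFun A = F.toFun B :=
  ContinuousLinearMap.ext_inner_self fun h => by rw [E.eval h A hA, F.eval h B hB, hAB]

lemma toFun_union (hA : MeasurableSet A) (hB : MeasurableSet B) (hAB : Disjoint A B) :
    E.toFun (A ∪ B) = E.toFun A + E.toFun B := by
  refine ContinuousLinearMap.ext_inner_self fun h => ?_
  have := E.finite h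
  rw [E.eval h _ (hA.union hB), add_apply, inner_add_left, E.eval h A hA, E.eval h B hB,
    measure_union hAB hB, ENNReal.toReal_add (measure_ne_top _ _) (measure_ne_top _ _),
    Complex.ofReal_add]

namespace IsSpectral

lemma toFun_mul_of_disjoint (hE : E.IsSpectral) (hA : MeasurableSet A) (hB : MeasurableSet B)
    (hAB : Disjoint A B) : E.toFun A * E.toFun B = 0 :=
  (hE A hA).2.mul_eq_zero_of_add (𝕜 := ℂ) (hE B hB).2
    (toFun_union (E := E) hA hB hAB ▸ (hE _ (hA.union hB)).2)

lemma toFun_mul (hE : E.IsSpectral) (hA : MeasurableSet A) (hB : MeasurableSet B) :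
    E.toFun A * E.toFun B = E.toFun (A ∩ B) := by
  have hAB := hA.inter hB
  have hsplitA : E.toFun A = E.toFun (A ∩ B) + E.toFun (A \ B) := by
    rw [← toFun_union hAB (hA.diff hB) disjoint_sdiff_inter.symm, inter_union_sdiff]
  have hsplitB : E.toFun B = E.toFun (A ∩ B) + E.toFun (B \ A) := by
    rw [← toFun_union hAB (hB.diff hA) (inter_comm A B ▸ disjoint_sdiff_inter.symm), inter_comm,
      inter_union_sdiff]
  rw [hsplitA, hsplitB, add_mul, mul_add, mul_add, (hE _ hAB).2.eq,
    hE.toFun_mul_of_disjoint hAB (hB.diff hA) (disjoint_sdiff_right.mono_left inter_subset_left),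
    hE.toFun_mul_of_disjoint (hA.diff hB) hAB (disjoint_sdiff_left.mono_right inter_subset_right),
    hE.toFun_mul_of_disjoint (hA.diff hB) (hB.diff hA)
      (disjoint_sdiff_left.mono_right sdiff_subset),
    add_zero, add_zero, add_zero]

lemma measure_toFun_apply (hE : E.IsSpectral) (hA : MeasurableSet A) (hB : MeasurableSet B)
    (h : H) : E.measure (E.toFun B h) A = E.measure h (A ∩ B) := by
  have := E.finite h
  have := E.finite (E.toFun B h)
  have key : inner ℂ (E.toFun A (E.toFun B h)) (E.toFun B h) = inner ℂ (E.toFun (A ∩ B) h) h :=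
    calc inner ℂ (E.toFun A (E.toFun B h)) (E.toFun B h)
        = inner ℂ ((E.toFun B * E.toFun A * E.toFun B) h) h :=
          ((hE B hB).1.isSymmetric _ h).symm
      _ = inner ℂ (E.toFun (A ∩ B) h) h := by
          rw [hE.toFun_mul hB hA, hE.toFun_mul (hB.inter hA) hB, inter_comm B A, inter_assoc,
            inter_self]
  rw [E.eval _ A hA, E.eval h _ (hA.inter hB), Complex.ofReal_inj] at key
  exact (ENNReal.toReal_eq_toReal_iff' (measure_ne_top _ _) (measure_ne_top _ _)).1 key

end IsSpectral

end SemispectralMeasure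

lemma SemispectralMeasure.IsSpectral.measure_eq_of_moments_eq {E : SemispectralMeasure ℝ H}
    (hE : E.IsSpectral) {ν : H → Measure ℝ} [∀ h, IsFiniteMeasure (ν h)] {a b : ℝ}
    (hν : ∀ h, ∀ᵐ x ∂ν h, x ∈ Icc a b)
    (hmom : ∀ (k : ℕ) (h : H), ∫ x, x ^ k ∂E.measure h = ∫ x, x ^ k ∂ν h) (h : H) :
    E.measure h = ν h := by
  have := E.finite
  have hcut : ∀ m : ℕ, E.measure (E.toFun (Icc (-m) m) h) = ν (E.toFun (Icc (-m) m) h) := by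
    intro m
    have hsupp : ∀ᵐ x ∂E.measure (E.toFun (Icc (-m) m) h), x ∈ Icc (-m : ℝ) m := by
      change E.measure _ (Icc (-m : ℝ) m)ᶜ = 0
      rw [hE.measure_toFun_apply measurableSet_Icc.compl measurableSet_Icc,
        compl_inter_self, measure_empty]
    refine Measure.ext_of_moments_eq_of_ae_mem_Icc (a := min a (-m)) (b := max b m)
      (hsupp.mono fun x hx => ?_) ((hν _).mono fun x hx => ?_) (hmom · _)
    · exact Icc_subset_Icc (min_le_right _ _) (le_max_right _ _) hx
    · exact Icc_subset_Icc (min_le_left _ _) (le_max_left _ _) hx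
  have hsupp : ∀ᵐ x ∂E.measure h, x ∈ Icc a b := by
    have hcover : (Icc a b)ᶜ ⊆ ⋃ m : ℕ, (Icc a b)ᶜ ∩ Icc (-m : ℝ) m := fun x hx =>
      mem_iUnion.2 ⟨⌈|x|⌉₊, hx, abs_le.1 (Nat.le_ceil _)⟩
    refine measure_mono_null hcover (measure_iUnion_null fun m => ?_)
    rw [← hE.measure_toFun_apply measurableSet_Icc.compl measurableSet_Icc, hcut m]
    exact hν _
  exact Measure.ext_of_moments_eq_of_ae_mem_Icc hsupp (hν h) (hmom · h)

lemma ae_mem_Icc_map_pow {μ : Measure ℝ} (hμ : μ (Iio 0) = 0) {n : ℕ} {C : ℝ}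
    (hC : μ.map (fun x : ℝ => x ^ n) (Ioi C) = 0) :
    ∀ᵐ x ∂μ.map (fun x : ℝ => x ^ n), x ∈ Icc 0 C := by
  have hneg : μ.map (fun x : ℝ => x ^ n) (Iio 0) = 0 := by
    rw [Measure.map_apply (by fun_prop) measurableSet_Iio]
    refine measure_mono_null (fun x hx => ?_) hμ
    rw [mem_preimage, mem_Iio] at hx
    exact lt_of_not_ge fun hx0 => (pow_nonneg hx0 n).not_gt hx
  change μ.map (fun x : ℝ => x ^ n) (Icc 0 C)ᶜ = 0
  refine measure_mono_null (fun x hx => ?_) (measure_union_null hneg hC)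
  rw [mem_compl_iff, mem_Icc, not_and_or, not_le, not_le] at hx
  exact hx

lemma SemispectralMeasure.exists_toFun_eq_toFun_preimage_pow {F : SemispectralMeasure ℝ H}
    (hF : ∀ h, F.measure h (Iio 0) = 0) {n : ℕ} (hn : n ≠ 0) {Δ : Set ℝ}
    (hΔ : MeasurableSet Δ) :
    ∃ Δ', MeasurableSet Δ' ∧ F.toFun Δ = F.toFun ((fun x : ℝ => x ^ n) ⁻¹' Δ') := by
  have hinj : InjOn (fun x : ℝ => x ^ n) (Ici 0) := (pow_left_strictMonoOn₀ hn).injOn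
  have hΔ' : MeasurableSet ((fun x : ℝ => x ^ n) '' (Δ ∩ Ici 0)) :=
    (hΔ.inter measurableSet_Ici).image_of_continuousOn_injOn (continuous_pow n).continuousOn
      (hinj.mono inter_subset_right)
  refine ⟨_, hΔ', toFun_eq_of_measure_eq hΔ (hΔ'.preimage (by fun_prop)) fun h => ?_⟩
  have hconull : F.measure h (Ici 0)ᶜ = 0 := by rw [compl_Ici]; exact hF h
  rw [← measure_inter_conull hconull, ← measure_inter_conull (s := _ ⁻¹' _) hconull,
    hinj.preimage_image_inter inter_subset_right]

theorem pushforward_determinate_spectral_general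
    (F E : SemispectralMeasure ℝ H) (n : ℕ) (hn : 1 ≤ n)
    (hF0 : ∀ h : H, F.measure h (Set.Iio 0) = 0)
    (hE : E.IsSpectral)
    (hcomp : ∃ C : ℝ, ∀ h : H, (F.measure h).map (fun x : ℝ => x ^ n) (Set.Ioi C) = 0)
    (hmom : ∀ (k : ℕ) (h : H), ∫ x, x ^ k ∂(E.measure h)
      = ∫ x, x ^ k ∂((F.measure h).map (fun x : ℝ => x ^ n))) :
    (∀ Δ : Set ℝ, MeasurableSet Δ → E.toFun Δ = F.toFun ((fun x : ℝ => x ^ n) ⁻¹' Δ)) ∧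
      F.IsSpectral := by
  have := F.finite
  obtain ⟨C, hC⟩ := hcomp
  have hEF : ∀ h, E.measure h = (F.measure h).map (fun x : ℝ => x ^ n) :=
    hE.measure_eq_of_moments_eq (fun h => ae_mem_Icc_map_pow (hF0 h) (hC h)) hmom
  have hpush : ∀ Δ : Set ℝ, MeasurableSet Δ → E.toFun Δ = F.toFun ((fun x : ℝ => x ^ n) ⁻¹' Δ) :=
    fun Δ hΔ => SemispectralMeasure.toFun_eq_of_measure_eq hΔ (hΔ.preimage (by fun_prop))
      fun h => by rw [hEF, Measure.map_apply (by fun_prop) hΔ]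
  refine ⟨hpush, fun Δ hΔ => ?_⟩
  obtain ⟨Δ', hΔ', hFΔ⟩ :=
    SemispectralMeasure.exists_toFun_eq_toFun_preimage_pow hF0 (Nat.one_le_iff_ne_zero.1 hn) hΔ
  rw [hFΔ, ← hpush Δ' hΔ']
  exact hE Δ' hΔ'

/-- Let `F` be a semispectral Borel measure on `[0,∞)`, `n ≥ 1` and `ψ_n(x) = x^n`. If `E` is a
spectral measure on `[0,∞)` whose moments agree with those of the pushforward `F ∘ ψ_n⁻¹`, and
`F ∘ ψ_n⁻¹` has compact support, then `E = F ∘ ψ_n⁻¹`, and consequently `F` is spectral. -/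
theorem pushforward_determinate_spectral
    (F E : SemispectralMeasure ℝ H) (n : ℕ) (hn : 1 ≤ n)
    (hF0 : ∀ h : H, F.measure h (Set.Iio 0) = 0)
    (hE0 : ∀ h : H, E.measure h (Set.Iio 0) = 0)
    (hE : E.IsSpectral)
    (hcomp : ∃ C : ℝ, ∀ h : H, (F.measure h).map (fun x : ℝ => x ^ n) (Set.Ioi C) = 0)
    (hmom : ∀ (k : ℕ) (h : H), ∫ x, x ^ k ∂(E.measure h)
      = ∫ x, x ^ k ∂((F.measure h).map (fun x : ℝ => x ^ n))) :
    (∀ Δ : Set ℝ, MeasurableSet Δ → E.toFun Δ = F.toFun ((fun x : ℝ => x ^ n) ⁻¹' Δ)) ∧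
      F.IsSpectral :=
  pushforward_determinate_spectral_general F E n hn hF0 hE hcomp hmom
end

section
/- Let A be a bounded subnormal operator on a Hilbert space H with normal extension N on K, and let P be the orthogonal projection of K onto H. Define the semispectral measure Θ(Δ) = P G_N(Δ)|_H for Borel sets Δ ⊆ ℂ, where G_N is the spectral measure of N. Then A^{*k} A^k = ∫_ℂ |z|^{2k} dΘ(z) for all nonnegative integers k. -/
open ContinuousLinearMap MeasureTheory

variable {H : Type*} [NormedAddCommGroup H] [InnerProductSpace ℂ H] [CompleteSpace H]

theorem ContinuousLinearMap.inner_adjoint_pow_mul_pow_apply_self {𝕜 E : Type*} [RCLike 𝕜]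
    [NormedAddCommGroup E] [InnerProductSpace 𝕜 E] [CompleteSpace E] (A : E →L[𝕜] E) (k : ℕ) (x : E) :
    inner 𝕜 ((adjoint A ^ k * A ^ k) x) x = (‖(A ^ k) x‖ : 𝕜) ^ 2 := by
  rw [← star_eq_adjoint, ← star_pow, star_eq_adjoint, mul_apply_eq_comp, adjoint_inner_left,
    inner_self_eq_norm_sq_to_K]

theorem Complex.conj_pow_mul_pow (z : ℂ) (k : ℕ) :
    (starRingEnd ℂ z) ^ k * z ^ k = ((‖z‖ ^ (2 * k) : ℝ) : ℂ) := by
  rw [← mul_pow, Complex.conj_mul', pow_mul, Complex.ofReal_pow, Complex.ofReal_pow]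

theorem subnormal_moments_via_spectral_measure_general
    {K : Type*} [NormedAddCommGroup K] [InnerProductSpace ℂ K] [CompleteSpace K]
    (A : H →L[ℂ] H) (N : K →L[ℂ] K)
    (J : H →ₗᵢ[ℂ] K) (hext : ∀ h : H, N (J h) = J (A h))
    (G : SemispectralMeasure ℂ K)
    (hGmom : ∀ (j k : ℕ) (g : K),
      (inner ℂ (((adjoint N) ^ j * N ^ k) g) g : ℂ)
        = ∫ z, (starRingEnd ℂ z) ^ j * z ^ k ∂(G.measure g)) :
    ∀ (k : ℕ) (h : H),
      (inner ℂ (((adjoint A) ^ k * A ^ k) h) h : ℂ)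
        = ((∫ z, ‖z‖ ^ (2 * k) ∂(G.measure (J h)) : ℝ) : ℂ) := by
  intro k h
  have hNk : (N ^ k) (J h) = J ((A ^ k) h) := by
    simp only [pow_apply_eq_iterate]
    exact ((Function.Semiconj.iterate_right (fun x ↦ (hext x).symm) k) h).symm
  calc inner ℂ ((adjoint A ^ k * A ^ k) h) h
      = inner ℂ ((adjoint N ^ k * N ^ k) (J h)) (J h) := by
        rw [inner_adjoint_pow_mul_pow_apply_self, inner_adjoint_pow_mul_pow_apply_self, hNk,
          LinearIsometry.norm_map]
    _ = ∫ z, ((‖z‖ ^ (2 * k) : ℝ) : ℂ) ∂(G.measure (J h)) := by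
        simp only [hGmom, Complex.conj_pow_mul_pow]
    _ = _ := integral_ofReal

/-- Let `A` be subnormal with normal extension `N` on `K` (the inclusion `H ⊆ K` realized by
the isometric embedding `J`), let `G` be the spectral measure of `N` (characterized by being
spectral, compactly supported, and reproducing the moments `⟨N^{*j} N^k h, h⟩ = ∫ z̄^j z^k dG`),
and let `Θ(Δ) = P G(Δ)|_H`, so that `⟨Θ(·)h, h⟩ = G.measure (J h)`. Then
`A^{*k} A^k = ∫_ℂ |z|^{2k} dΘ(z)` for all `k ∈ ℕ` (via quadratic forms). -/
theorem subnormal_moments_via_spectral_measure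
    {K : Type*} [NormedAddCommGroup K] [InnerProductSpace ℂ K] [CompleteSpace K]
    (A : H →L[ℂ] H) (N : K →L[ℂ] K) (hN : adjoint N * N = N * adjoint N)
    (J : H →ₗᵢ[ℂ] K) (hext : ∀ h : H, N (J h) = J (A h))
    (G : SemispectralMeasure ℂ K) (hG : G.IsSpectral)
    (hGcomp : ∃ C : ℝ, ∀ g : K, G.measure g {z : ℂ | C < ‖z‖} = 0)
    (hGmom : ∀ (j k : ℕ) (g : K),
      (inner ℂ (((adjoint N) ^ j * N ^ k) g) g : ℂ)
        = ∫ z, (starRingEnd ℂ z) ^ j * z ^ k ∂(G.measure g)) :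
    ∀ (k : ℕ) (h : H),
      (inner ℂ (((adjoint A) ^ k * A ^ k) h) h : ℂ)
        = ((∫ z, ‖z‖ ^ (2 * k) ∂(G.measure (J h)) : ℝ) : ℂ) :=
  subnormal_moments_via_spectral_measure_general A N J hext G hGmom
end
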